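/- arXiv:2102.07245 — 2 statements merged into one kernel-verified Lean document; each statement's English description precedes it below -/
import Mathlib

section
/- Let L be a symmetric positive semidefinite d×d real matrix, let S be a proper sampling on {1,…,d} with sketch C and marginals p_j, set ω = max_j (1/p_j) − 1 and C̄ = L^{1/2} C L^{†1/2}. Then for every α with 0 ≤ α ≤ 1/(1 + ω), in the Loewner order: L^{1/2} E[ (I − α C̄)ᵀ L† (I − α C̄) ] L^{1/2} ⪯ (1 − α) · L^{1/2} L† L^{1/2}. -/
open scoped BigOperators RealInnerProductSpace
open Matrix

noncomputable section

/-- A proper sampling on `{1,…,d}`: a finitely supported probability distribution over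
subsets of `Fin d` whose marginal probabilities are all positive. -/
structure Sampling (d : ℕ) where
  prob : Finset (Fin d) → ℝ
  nonneg : ∀ S, 0 ≤ prob S
  total : ∑ S : Finset (Fin d), prob S = 1
  margPos : ∀ j : Fin d, 0 < ∑ S : Finset (Fin d), if j ∈ S then prob S else 0

namespace Sampling

variable {d : ℕ} (μ : Sampling d)

/-- Marginal probability `p_j = Prob(j ∈ S)`. -/
def marg (j : Fin d) : ℝ := ∑ S : Finset (Fin d), if j ∈ S then μ.prob S else 0

/-- Probability matrix `P`, with entries `p_{jl} = Prob({j,l} ⊆ S)`. -/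
def probMatrix : Matrix (Fin d) (Fin d) ℝ :=
  Matrix.of fun j l => ∑ S : Finset (Fin d), if j ∈ S ∧ l ∈ S then μ.prob S else 0

/-- The matrix `P̄` with entries `p_{jl}/(p_j p_l)`. -/
def Pbar : Matrix (Fin d) (Fin d) ℝ :=
  Matrix.of fun j l => μ.probMatrix j l / (μ.marg j * μ.marg l)

/-- The matrix `P̃ = P̄ − E` where `E` is the all-ones matrix. -/
def Ptilde : Matrix (Fin d) (Fin d) ℝ := μ.Pbar - Matrix.of fun _ _ => (1 : ℝ)

/-- The unbiased diagonal sketch `C` associated with a realization `S` of the sampling. -/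
def sketch (S : Finset (Fin d)) : Matrix (Fin d) (Fin d) ℝ :=
  Matrix.diagonal fun j => if j ∈ S then (μ.marg j)⁻¹ else 0

end Sampling

/-- Largest eigenvalue of a symmetric matrix, via the Rayleigh quotient. -/
def lambdaMax {d : ℕ} (M : Matrix (Fin d) (Fin d) ℝ) : ℝ :=
  sSup {r : ℝ | ∃ v : Fin d → ℝ, v ⬝ᵥ v = 1 ∧ r = v ⬝ᵥ M.mulVec v}

/-- Smallest eigenvalue of a symmetric matrix, via the Rayleigh quotient. -/
def lambdaMin {d : ℕ} (M : Matrix (Fin d) (Fin d) ℝ) : ℝ :=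
  sInf {r : ℝ | ∃ v : Fin d → ℝ, v ⬝ᵥ v = 1 ∧ r = v ⬝ᵥ M.mulVec v}

/-- `Mdag` is the Moore–Penrose pseudoinverse of `M`. -/
def IsMoorePenrose {m n : Type*} [Fintype m] [Fintype n]
    (M : Matrix m n ℝ) (Mdag : Matrix n m ℝ) : Prop :=
  M * Mdag * M = M ∧ Mdag * M * Mdag = Mdag ∧
    (M * Mdag)ᵀ = M * Mdag ∧ (Mdag * M)ᵀ = Mdag * M

/-- Vectors in `ℝ^d` with the Euclidean inner product. -/
abbrev Vec (d : ℕ) := EuclideanSpace ℝ (Fin d)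

/-- Action of a matrix on a Euclidean vector. -/
def mact {d e : ℕ} (M : Matrix (Fin e) (Fin d) ℝ) (x : Vec d) : Vec e :=
  Matrix.toEuclideanLin M x

/-- Quadratic form `xᵀ M x`, i.e. the squared `M`-seminorm `‖x‖²_M`. -/
def quad {d : ℕ} (M : Matrix (Fin d) (Fin d) ℝ) (x : Vec d) : ℝ := ⟪x, mact M x⟫

/-- `f` is `M`-smooth: `f x ≤ f y + ⟨∇f(y), x−y⟩ + ½ (x−y)ᵀ M (x−y)` for all `x, y`. -/
def MSmooth {d : ℕ} (f : Vec d → ℝ) (M : Matrix (Fin d) (Fin d) ℝ) : Prop :=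
  ∀ x y : Vec d, f x ≤ f y + ⟪gradient f y, x - y⟫ + (1 / 2) * quad M (x - y)

/-- Random iterates driven by i.i.d. draws: `traj x0 step k ω` is the `k`-th iterate along
the sample path `ω` of `k` draws. -/
def traj {V Ω : Type*} (x0 : V) (step : V → Ω → V) : ∀ k : ℕ, (Fin k → Ω) → V
  | 0, _ => x0
  | k + 1, ω => step (traj x0 step k fun i => ω i.castSucc) (ω (Fin.last k))

/-- Expectation `E[φ(x^k)]` of a functional of the `k`-th iterate, over `k` i.i.d. draws
with one-step distribution `P`. -/
def trajExp {V Ω : Type*} [Fintype Ω] (P : Ω → ℝ) (x0 : V) (step : V → Ω → V)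
    (φ : V → ℝ) (k : ℕ) : ℝ :=
  ∑ ω : Fin k → Ω, (∏ i, P (ω i)) * φ (traj x0 step k ω)

/-!
Write `P = L† L`, the orthogonal projection onto the range of `L`. Square roots of commuting
positive semidefinite matrices commute, so `L^{†1/2} L^{1/2}` is a positive semidefinite square root
of `P`, hence equals `P`, and the matrix under the expectation becomes
`(P - α P C P)ᵀ (P - α P C P)`. As `E[C] = I`, its expectation is `(1 - 2α) P + α² P E[C P C] P`,
and `P ⪯ I` gives `E[C P C] ⪯ E[C²] = diag(1/p_j) ⪯ (1 + ω) I`. So the expectation is at most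
`(1 - α) P - α (1 - α (1 + ω)) P ⪯ (1 - α) P`.
-/

open scoped MatrixOrder

section

variable {n : Type*}

theorem Matrix.diagonal_le_smul_one [DecidableEq n] {f : n → ℝ} {c : ℝ} (hf : ∀ j, f j ≤ c) :
    diagonal f ≤ c • 1 := by
  rw [Matrix.le_iff, smul_one_eq_diagonal, diagonal_sub]
  exact PosSemidef.diagonal fun j => sub_nonneg.mpr (hf j)

variable [Fintype n]

theorem Matrix.mul_mul_self_mul_eq_conjTranspose_mul {A B : Matrix n n ℝ} (hA : A.IsHermitian)
    (hB : B.IsHermitian) (X : Matrix n n ℝ) :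
    A * Xᵀ * (B * B) * X * A = (B * X * A)ᴴ * (B * X * A) := by
  rw [conjTranspose_eq_transpose_of_trivial, transpose_mul, transpose_mul,
    ← conjTranspose_eq_transpose_of_trivial A, ← conjTranspose_eq_transpose_of_trivial B, hA.eq,
    hB.eq]
  simp only [mul_assoc]

theorem Matrix.PosSemidef.commute_of_mul_self_eq [DecidableEq n] {A B C : Matrix n n ℝ}
    (hB : B.PosSemidef) (hBA : B * B = A) (hAC : Commute A C) : Commute B C := by
  rw [← CFC.sqrt_unique hBA hB.nonneg, CFC.sqrt_eq_cfc]
  exact hAC.cfc_nnreal _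

namespace IsMoorePenrose

variable {L Ldag : Matrix n n ℝ}

theorem commute (h : IsMoorePenrose L Ldag) (hL : L.IsHermitian) (hLdag : Ldag.IsHermitian) :
    Commute Ldag L := by
  have hsymm := h.2.2.2
  rwa [transpose_mul, ← conjTranspose_eq_transpose_of_trivial,
    ← conjTranspose_eq_transpose_of_trivial, hL.eq, hLdag.eq, eq_comm] at hsymm

theorem isIdempotentElem_mul (h : IsMoorePenrose L Ldag) : IsIdempotentElem (Ldag * L) := by
  rw [IsIdempotentElem, ← mul_assoc, h.2.1]

theorem isStarProjection_mul (h : IsMoorePenrose L Ldag) (hL : L.IsHermitian)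
    (hLdag : Ldag.IsHermitian) : IsStarProjection (Ldag * L) :=
  ⟨h.isIdempotentElem_mul,
    (hLdag.isSelfAdjoint.commute_iff hL.isSelfAdjoint).mp (h.commute hL hLdag)⟩

theorem sqrt_mul_sqrt_eq [DecidableEq n] (h : IsMoorePenrose L Ldag) (hL : L.PosSemidef)
    (hLdag : Ldag.PosSemidef) {Lh Ldh : Matrix n n ℝ} (hLh : Lh.PosSemidef) (hLh2 : Lh * Lh = L)
    (hLdh : Ldh.PosSemidef) (hLdh2 : Ldh * Ldh = Ldag) :
    Ldh * Lh = Ldag * L := by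
  have hcomm : Commute Ldag L := h.commute hL.isHermitian hLdag.isHermitian
  have hLhLdag : Commute Lh Ldag := hLh.commute_of_mul_self_eq hLh2 hcomm.symm
  have hLdhLh : Commute Ldh Lh := hLdh.commute_of_mul_self_eq hLdh2 hLhLdag.symm
  refine (CFC.sq_eq_sq_iff _ _ (hLdhLh.mul_nonneg hLdh.nonneg hLh.nonneg)
    (hcomm.mul_nonneg hLdag.nonneg hL.nonneg)).mp ?_
  rw [hLdhLh.mul_pow, sq, sq, hLdh2, hLh2, h.isIdempotentElem_mul.pow_succ_eq 1]

end IsMoorePenrose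

end

namespace Sampling

variable {d : ℕ} (μ : Sampling d)

theorem marg_pos (j : Fin d) : 0 < μ.marg j := μ.margPos j

theorem sum_ite_mem_prob_mul (j : Fin d) (x : ℝ) :
    ∑ S : Finset (Fin d), (if j ∈ S then μ.prob S * x else 0) = μ.marg j * x := by
  simp only [marg, Finset.sum_mul, ite_mul, zero_mul]

theorem sum_prob_smul_sketch : ∑ S : Finset (Fin d), μ.prob S • μ.sketch S = 1 := by
  ext i j
  rcases eq_or_ne i j with rfl | hij
  · simp [sketch, Matrix.sum_apply, sum_ite_mem_prob_mul, (μ.marg_pos i).ne']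
  · simp [sketch, Matrix.sum_apply, hij]

theorem sum_prob_smul_sketch_mul_sketch :
    ∑ S : Finset (Fin d), μ.prob S • (μ.sketch S * μ.sketch S) =
      Matrix.diagonal fun j => (μ.marg j)⁻¹ := by
  ext i j
  rcases eq_or_ne i j with rfl | hij
  · simp [sketch, Matrix.sum_apply, ← ite_and, sum_ite_mem_prob_mul, (μ.marg_pos i).ne']
  · simp [sketch, Matrix.sum_apply, hij]

theorem isHermitian_sketch (S : Finset (Fin d)) : (μ.sketch S).IsHermitian :=
  isHermitian_diagonal _

theorem sum_prob_smul_sketch_mul_mul_sketch_le {P : Matrix (Fin d) (Fin d) ℝ} (hP : P ≤ 1) :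
    ∑ S : Finset (Fin d), μ.prob S • (μ.sketch S * P * μ.sketch S) ≤
      Matrix.diagonal fun j => (μ.marg j)⁻¹ := by
  rw [← sum_prob_smul_sketch_mul_sketch]
  refine Finset.sum_le_sum fun S _ => smul_le_smul_of_nonneg_left ?_ (μ.nonneg S)
  have h := star_left_conjugate_le_conjugate hP (μ.sketch S)
  rwa [show star (μ.sketch S) = μ.sketch S from μ.isHermitian_sketch S, mul_one] at h

theorem conjTranspose_mul_self_sub_sketch {P : Matrix (Fin d) (Fin d) ℝ} (hP : IsStarProjection P)
    (α : ℝ) (S : Finset (Fin d)) :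
    (P - α • (P * μ.sketch S * P))ᴴ * (P - α • (P * μ.sketch S * P)) =
      P - (2 * α) • (P * μ.sketch S * P) + (α * α) • (P * (μ.sketch S * P * μ.sketch S) * P) := by
  have hPP (X : Matrix (Fin d) (Fin d) ℝ) : P * (P * X) = P * X := by
    rw [← mul_assoc, hP.isIdempotentElem.eq]
  have hPs : Pᴴ = P := hP.isSelfAdjoint
  simp only [conjTranspose_sub, conjTranspose_smul, conjTranspose_mul, hPs,
    (μ.isHermitian_sketch S).eq, star_trivial, sub_mul, mul_sub, smul_mul_assoc, mul_smul_comm,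
    mul_assoc, hPP, hP.isIdempotentElem.eq]
  module

theorem sum_prob_smul_conjTranspose_mul_self_sub_sketch {P : Matrix (Fin d) (Fin d) ℝ}
    (hP : IsStarProjection P) (α : ℝ) :
    ∑ S : Finset (Fin d), μ.prob S •
        ((P - α • (P * μ.sketch S * P))ᴴ * (P - α • (P * μ.sketch S * P))) =
      (1 - 2 * α) • P + (α * α) • (P *
        (∑ S : Finset (Fin d), μ.prob S • (μ.sketch S * P * μ.sketch S)) * P) := by
  calc _ = ∑ S : Finset (Fin d), (μ.prob S • P - (2 * α) • (P * (μ.prob S • μ.sketch S) * P)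
        + (α * α) • (P * (μ.prob S • (μ.sketch S * P * μ.sketch S)) * P)) := by
        refine Finset.sum_congr rfl fun S _ => ?_
        rw [μ.conjTranspose_mul_self_sub_sketch hP]
        simp only [smul_add, smul_sub, smul_mul_assoc, mul_smul_comm, smul_smul]
        module
    _ = _ := by
        rw [Finset.sum_add_distrib, Finset.sum_sub_distrib, ← Finset.sum_smul, ← Finset.smul_sum,
          ← Finset.smul_sum, ← Finset.sum_mul, ← Finset.sum_mul, ← Finset.mul_sum, ← Finset.mul_sum,
          μ.total, μ.sum_prob_smul_sketch, mul_one, hP.isIdempotentElem.eq]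
        module

theorem sum_prob_smul_conjTranspose_mul_self_sub_sketch_le {P : Matrix (Fin d) (Fin d) ℝ}
    (hP : IsStarProjection P) {c α : ℝ} (hc : ∀ j, (μ.marg j)⁻¹ ≤ c) (hα : 0 ≤ α)
    (hαc : α * c ≤ 1) :
    ∑ S : Finset (Fin d), μ.prob S •
        ((P - α • (P * μ.sketch S * P))ᴴ * (P - α • (P * μ.sketch S * P))) ≤ (1 - α) • P := by
  have hPs : star P = P := hP.isSelfAdjoint
  have hM : ∑ S : Finset (Fin d), μ.prob S • (μ.sketch S * P * μ.sketch S) ≤ c • 1 :=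
    (μ.sum_prob_smul_sketch_mul_mul_sketch_le hP.le_one).trans (diagonal_le_smul_one hc)
  have hPMP := star_left_conjugate_le_conjugate hM P
  rw [hPs] at hPMP
  calc _ = (1 - 2 * α) • P + (α * α) • (P *
        (∑ S : Finset (Fin d), μ.prob S • (μ.sketch S * P * μ.sketch S)) * P) :=
        μ.sum_prob_smul_conjTranspose_mul_self_sub_sketch hP α
    _ ≤ (1 - 2 * α) • P + (α * α) • (P * (c • 1) * P) := by
        gcongr
    _ = (1 - α) • P - (α * (1 - α * c)) • P := by
        rw [mul_smul_comm, mul_one, smul_mul_assoc, hP.isIdempotentElem.eq]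
        module
    _ ≤ (1 - α) • P :=
        sub_le_self _ (smul_nonneg (mul_nonneg hα (sub_nonneg.mpr hαc)) hP.nonneg)

end Sampling

theorem statement14_general {d : ℕ} (μ : Sampling d)
    (L Lh Ldag Ldh : Matrix (Fin d) (Fin d) ℝ)
    (hL : L.PosSemidef) (hLh : Lh.PosSemidef) (hLh2 : Lh * Lh = L)
    (hdag : IsMoorePenrose L Ldag) (hLdh : Ldh.PosSemidef) (hLdh2 : Ldh * Ldh = Ldag)
    (ω : ℝ) (hω : ω = (⨆ j : Fin d, (μ.marg j)⁻¹) - 1)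
    (α : ℝ) (hα0 : 0 ≤ α) (hα1 : α ≤ 1 / (1 + ω)) :
    ((1 - α) • (Lh * Ldag * Lh)
      - ∑ S : Finset (Fin d), μ.prob S •
          (Lh * (1 - α • (Lh * μ.sketch S * Ldh))ᵀ * Ldag
            * (1 - α • (Lh * μ.sketch S * Ldh)) * Lh)).PosSemidef := by
  have hLdag : Ldag.PosSemidef := by simpa [sq, hLdh2] using hLdh.pow 2
  have hP := hdag.isStarProjection_mul hL.1 hLdag.1
  have hQ : Ldh * Lh = Ldag * L := hdag.sqrt_mul_sqrt_eq hL hLdag hLh hLh2 hLdh hLdh2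
  have hc (j : Fin d) : (μ.marg j)⁻¹ ≤ 1 + ω := by
    rw [hω, add_sub_cancel]
    exact le_ciSup (f := fun j => (μ.marg j)⁻¹) (Set.finite_range _).bddAbove j
  have hαc : α * (1 + ω) ≤ 1 := by
    -- `1 + ω ≤ 0` happens only for `d = 0`, where the empty supremum is `0`.
    rcases le_or_gt (1 + ω) 0 with hω0 | hω0
    · exact (mul_nonpos_of_nonneg_of_nonpos hα0 hω0).trans zero_le_one
    · rwa [le_div_iff₀ hω0] at hα1
  have hPs : (Ldag * L)ᴴ = Ldag * L := hP.isSelfAdjoint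
  have hLdagL : Lh * (Ldh * Ldh) * Lh = Ldag * L := by
    have h := Matrix.mul_mul_self_mul_eq_conjTranspose_mul hLh.1 hLdh.1 1
    rwa [transpose_one, mul_one, mul_one, mul_one, hQ, hPs, hP.isIdempotentElem.eq] at h
  rw [← Matrix.le_iff, ← hLdh2, hLdagL]
  simp only [Matrix.mul_mul_self_mul_eq_conjTranspose_mul hLh.1 hLdh.1]
  have hsketch (S : Finset (Fin d)) : Ldh * (1 - α • (Lh * μ.sketch S * Ldh)) * Lh =
      Ldag * L - α • (Ldag * L * μ.sketch S * (Ldag * L)) := by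
    rw [← hQ]
    noncomm_ring
  simp only [hsketch]
  exact μ.sum_prob_smul_conjTranspose_mul_self_sub_sketch_le hP hc hα0 hαc

/-- for `0 ≤ α ≤ 1/(1+ω)` with `ω = max_j 1/p_j − 1` and
`C̄ = L^{1/2} C L^{†1/2}`, in the Loewner order
`L^{1/2} E[(I − αC̄)ᵀ L† (I − αC̄)] L^{1/2} ⪯ (1 − α) L^{1/2} L† L^{1/2}`. -/
theorem statement14 {d : ℕ} (hd : 0 < d) (μ : Sampling d)
    (L Lh Ldag Ldh : Matrix (Fin d) (Fin d) ℝ)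
    (hL : L.PosSemidef) (hLh : Lh.PosSemidef) (hLh2 : Lh * Lh = L)
    (hdag : IsMoorePenrose L Ldag) (hLdh : Ldh.PosSemidef) (hLdh2 : Ldh * Ldh = Ldag)
    (ω : ℝ) (hω : ω = (⨆ j : Fin d, (μ.marg j)⁻¹) - 1)
    (α : ℝ) (hα0 : 0 ≤ α) (hα1 : α ≤ 1 / (1 + ω)) :
    ((1 - α) • (Lh * Ldag * Lh)
      - ∑ S : Finset (Fin d), μ.prob S •
          (Lh * (1 - α • (Lh * μ.sketch S * Ldh))ᵀ * Ldag
            * (1 - α • (Lh * μ.sketch S * Ldh)) * Lh)).PosSemidef :=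
  statement14_general μ L Lh Ldag Ldh hL hLh hLh2 hdag hLdh hLdh2 ω hω α hα0 hα1

end
end

section
/- (ISEGA+ control-variate recursion.) Let f_1, …, f_n : ℝ^d → ℝ be differentiable, convex, bounded below and L_i-smooth for symmetric positive semidefinite matrices L_i, and f = (1/n) Σ_i f_i. Let C_1, …, C_n be sketches of proper samplings S_i with marginals p_{i;j} and let D_i = Diag(p_{i;1}, …, p_{i;d}). For vectors φ_1, …, φ_n ∈ ℝ^d, define the updates φ_i⁺ = φ_i + D_i C_i ( L_i^{†1/2} ∇f_i(x) − φ_i ). Then for all x, y ∈ ℝ^d: E[ (1/n) Σ_{i=1}^n ‖φ_i⁺ − L_i^{†1/2} ∇f_i(y)‖²_{D_i^{-1}} ] ≤ (1/n) Σ_{i=1}^n ‖φ_i − L_i^{†1/2} ∇f_i(y)‖²_{D_i^{-1} − I} + 2 D_f(x, y), where D_f(x,y) = f(x) − f(y) − ⟨∇f(y), x − y⟩. -/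
open scoped BigOperators RealInnerProductSpace
open Matrix

noncomputable section

/-!
Coordinatewise, the update `φ⁺ = φ + D C (h − φ)` replaces `φ_j` by `h_j` exactly when `j ∈ S`,
which happens with probability `p_j`. Weighting by `p_j⁻¹` therefore gives
`E ‖φ⁺ − h'‖²_{D⁻¹} = ‖φ − h'‖²_{D⁻¹ − I} + ‖h − h'‖²`. With `h − h' = L^{†1/2} (∇f(x) − ∇f(y))`
the last term is `‖∇f(x) − ∇f(y)‖²_{L†}`, and for a convex `L`-smooth `f` this is at most
`2 D_f(x, y)`: compare `f` at `x − L†(∇f(x) − ∇f(y))` with its upper model at `x` and its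
linear minorant at `y`. Averaging over `i` and using independence of the samplings concludes.
-/

section MatrixAction

variable {d e : ℕ}

lemma mact_mul {k : ℕ} (A : Matrix (Fin k) (Fin e) ℝ) (B : Matrix (Fin e) (Fin d) ℝ) (v : Vec d) :
    mact (A * B) v = mact A (mact B v) := by
  simp [mact]

lemma mact_neg (A : Matrix (Fin e) (Fin d) ℝ) (v : Vec d) : mact A (-v) = -mact A v :=
  map_neg _ v

lemma mact_sub (A : Matrix (Fin e) (Fin d) ℝ) (u v : Vec d) :
    mact A (u - v) = mact A u - mact A v :=
  map_sub _ u v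

lemma inner_mact_right (A : Matrix (Fin e) (Fin d) ℝ) (u : Vec e) (v : Vec d) :
    ⟪u, mact A v⟫ = ⟪mact Aᵀ u, v⟫ := by
  rw [mact, mact, ← Matrix.conjTranspose_eq_transpose_of_trivial,
    Matrix.toEuclideanLin_conjTranspose_eq_adjoint, LinearMap.adjoint_inner_left]

lemma quad_mact (M : Matrix (Fin e) (Fin e) ℝ) (A : Matrix (Fin e) (Fin d) ℝ) (v : Vec d) :
    quad M (mact A v) = quad (Aᵀ * M * A) v := by
  simp only [quad, mact_mul, inner_mact_right, Matrix.transpose_transpose]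

lemma quad_neg (M : Matrix (Fin d) (Fin d) ℝ) (v : Vec d) : quad M (-v) = quad M v := by
  rw [quad, mact_neg, inner_neg_neg, quad]

lemma norm_mact_sq (A : Matrix (Fin e) (Fin d) ℝ) (v : Vec d) :
    ‖mact A v‖ ^ 2 = quad (Aᵀ * A) v := by
  rw [← real_inner_self_eq_norm_sq, ← Matrix.mul_one Aᵀ, ← quad_mact]
  simp [quad, mact]

lemma mact_diagonal_apply (w : Fin d → ℝ) (v : Vec d) (j : Fin d) :
    mact (Matrix.diagonal w) v j = w j * v j := by
  simp [mact, Matrix.mulVec_diagonal]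

lemma quad_diagonal (w : Fin d → ℝ) (v : Vec d) :
    quad (Matrix.diagonal w) v = ∑ j, w j * v j ^ 2 := by
  simp only [quad, PiLp.inner_apply, mact_diagonal_apply, RCLike.inner_apply, conj_trivial]
  exact Finset.sum_congr rfl fun _ _ => by ring

end MatrixAction

namespace Sampling

variable {d : ℕ} (μ : Sampling d)

lemma sum_prob_mul_ite (j : Fin d) (a b : ℝ) :
    ∑ S, μ.prob S * (if j ∈ S then a else b) = μ.marg j * a + (1 - μ.marg j) * b := by
  calc ∑ S, μ.prob S * (if j ∈ S then a else b)
      = ∑ S, (μ.prob S * b + (if j ∈ S then μ.prob S else 0) * (a - b)) :=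
        Finset.sum_congr rfl fun S _ => by split_ifs <;> ring
    _ = μ.marg j * a + (1 - μ.marg j) * b := by
        rw [Finset.sum_add_distrib, ← Finset.sum_mul, ← Finset.sum_mul, μ.total, marg]
        ring

lemma update_apply (S : Finset (Fin d)) (φ h : Vec d) (j : Fin d) :
    (φ + mact (Matrix.diagonal μ.marg * μ.sketch S) (h - φ)) j = if j ∈ S then h j else φ j := by
  have hp : μ.marg j ≠ 0 := (μ.margPos j).ne'
  rw [sketch, Matrix.diagonal_mul_diagonal, PiLp.add_apply, mact_diagonal_apply, PiLp.sub_apply]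
  split_ifs
  · rw [mul_inv_cancel₀ hp]
    ring
  · ring

lemma expected_quad_update (φ h h' : Vec d) :
    ∑ S, μ.prob S * quad (Matrix.diagonal fun j => (μ.marg j)⁻¹)
        (φ + mact (Matrix.diagonal μ.marg * μ.sketch S) (h - φ) - h')
      = quad ((Matrix.diagonal fun j => (μ.marg j)⁻¹) - 1) (φ - h') + ‖h - h'‖ ^ 2 := by
  have hdiag : (Matrix.diagonal fun j => (μ.marg j)⁻¹) - 1
      = Matrix.diagonal fun j => (μ.marg j)⁻¹ - 1 := by
    rw [← Matrix.diagonal_one, Matrix.diagonal_sub]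
  simp only [quad_diagonal, Finset.mul_sum, hdiag, EuclideanSpace.norm_sq_eq, Real.norm_eq_abs,
    sq_abs, PiLp.sub_apply, update_apply]
  rw [Finset.sum_comm, ← Finset.sum_add_distrib]
  refine Finset.sum_congr rfl fun j _ => ?_
  have hp : μ.marg j ≠ 0 := (μ.margPos j).ne'
  calc ∑ S, μ.prob S * ((μ.marg j)⁻¹ * ((if j ∈ S then h j else φ j) - h' j) ^ 2)
      = (μ.marg j)⁻¹ * ∑ S, μ.prob S *
          (if j ∈ S then (h j - h' j) ^ 2 else (φ j - h' j) ^ 2) := by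
        rw [Finset.mul_sum]
        exact Finset.sum_congr rfl fun S _ => by split_ifs <;> ring
    _ = ((μ.marg j)⁻¹ - 1) * (φ j - h' j) ^ 2 + (h j - h' j) ^ 2 := by
        rw [sum_prob_mul_ite]
        field_simp
        ring

end Sampling

section ProductExpectation

variable {ι Ω : Type*} [Fintype ι] [DecidableEq ι] [Fintype Ω]
  {P : ι → Ω → ℝ}

lemma sum_prod_mul_apply (hP : ∀ i, ∑ s, P i s = 1) (g : Ω → ℝ) (i : ι) :
    ∑ ω : ι → Ω, (∏ j, P j (ω j)) * g (ω i) = ∑ s, P i s * g s := by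
  calc ∑ ω : ι → Ω, (∏ j, P j (ω j)) * g (ω i)
      = ∑ ω : ι → Ω, ∏ j, P j (ω j) * (if j = i then g (ω j) else 1) := by
        refine Finset.sum_congr rfl fun ω _ => ?_
        rw [Finset.prod_mul_distrib, Finset.prod_ite_eq']
        simp
    _ = ∏ j, ∑ s, P j s * (if j = i then g s else 1) := by
        rw [Fintype.prod_sum]
    _ = ∑ s, P i s * g s := by
        rw [Fintype.prod_eq_single i fun j hj => by simp [hj, hP j]]
        simp

lemma sum_prod_mul_sum (hP : ∀ i, ∑ s, P i s = 1) (g : ι → Ω → ℝ) :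
    ∑ ω : ι → Ω, (∏ j, P j (ω j)) * ∑ i, g i (ω i) = ∑ i, ∑ s, P i s * g i s := by
  simp only [Finset.mul_sum]
  rw [Finset.sum_comm]
  exact Finset.sum_congr rfl fun i _ => sum_prod_mul_apply hP (g i) i

end ProductExpectation

section Bregman

variable {E : Type*} [NormedAddCommGroup E] [InnerProductSpace ℝ E] [CompleteSpace E]

def bregman (f : E → ℝ) (x y : E) : ℝ := f x - f y - ⟪gradient f y, x - y⟫

lemma ConvexOn.add_inner_gradient_le {f : E → ℝ} (hconv : ConvexOn ℝ Set.univ f) {y : E}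
    (hf : DifferentiableAt ℝ f y) (z : E) :
    f y + ⟪gradient f y, z - y⟫ ≤ f z := by
  have hline : ConvexOn ℝ Set.univ (f ∘ AffineMap.lineMap (k := ℝ) y z) := by
    simpa using hconv.comp_affineMap (AffineMap.lineMap y z)
  have hderiv : HasDerivAt (f ∘ AffineMap.lineMap (k := ℝ) y z) (fderiv ℝ f y (z - y)) 0 := by
    have hmap : HasDerivAt (fun t : ℝ => AffineMap.lineMap y z t) (z - y) 0 := by
      simpa [AffineMap.lineMap_apply] using
        ((hasDerivAt_id (0 : ℝ)).smul_const (z - y)).add_const y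
    have hf' : HasFDerivAt f (fderiv ℝ f y) (AffineMap.lineMap (k := ℝ) y z (0 : ℝ)) := by
      simpa using hf.hasFDerivAt
    exact hf'.comp_hasDerivAt 0 hmap
  have hslope := hline.le_slope_of_hasDerivAt (Set.mem_univ 0) (Set.mem_univ 1) one_pos hderiv
  simp only [slope_def_field, Function.comp_apply, AffineMap.lineMap_apply_zero,
    AffineMap.lineMap_apply_one, sub_zero, div_one] at hslope
  rw [inner_gradient_left]
  linarith

lemma bregman_const_mul_sum {ι : Type*} [Fintype ι] {f : ι → E → ℝ} {y : E}
    (hf : ∀ i, DifferentiableAt ℝ (f i) y) (c : ℝ) (x : E) :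
    bregman (fun z => c * ∑ i, f i z) x y = c * ∑ i, bregman (f i) x y := by
  have hderiv : HasFDerivAt (fun z => c * ∑ i, f i z) (c • ∑ i, fderiv ℝ (f i) y) y :=
    (HasFDerivAt.fun_sum fun i _ => (hf i).hasFDerivAt).const_mul c
  simp only [bregman, inner_gradient_left, hderiv.fderiv, _root_.smul_apply,
    FunLike.coe_sum, Finset.sum_apply, smul_eq_mul, Finset.sum_sub_distrib]
  ring

end Bregman

lemma MSmooth.quad_gradient_sub_le_bregman {d : ℕ} {f : Vec d → ℝ}
    {M A : Matrix (Fin d) (Fin d) ℝ} (hsmooth : MSmooth f M) (hconv : ConvexOn ℝ Set.univ f)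
    {y : Vec d} (hy : DifferentiableAt ℝ f y) (hA : Aᵀ * M * A = A) (x : Vec d) :
    quad A (gradient f x - gradient f y) ≤ 2 * bregman f x y := by
  set g := gradient f x - gradient f y
  have hupper := hsmooth (x - mact A g) x
  have hlower := hconv.add_inner_gradient_le hy (x - mact A g)
  have hquad : quad M (x - mact A g - x) = quad A g := by
    rw [sub_sub_cancel_left, quad_neg, quad_mact, hA]
  have hinner : ⟪gradient f x, x - mact A g - x⟫ - ⟪gradient f y, x - mact A g - y⟫
      = -quad A g - ⟪gradient f y, x - y⟫ := by
    rw [sub_sub_cancel_left, sub_right_comm, inner_neg_right, inner_sub_right, quad,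
      inner_sub_left]
    ring
  unfold bregman
  linarith

theorem statement15_general {d n : ℕ} (μs : Fin n → Sampling d)
    (fi : Fin n → Vec d → ℝ) (Li Lidag Lidh : Fin n → Matrix (Fin d) (Fin d) ℝ)
    (hfi : ∀ i, Differentiable ℝ (fi i) ∧ ConvexOn ℝ Set.univ (fi i) ∧
      BddBelow (Set.range (fi i)) ∧ MSmooth (fi i) (Li i))
    (hLidag : ∀ i, IsMoorePenrose (Li i) (Lidag i))
    (hLidh : ∀ i, (Lidh i).PosSemidef ∧ Lidh i * Lidh i = Lidag i)
    (f : Vec d → ℝ) (hf : f = fun x => (1 / (n : ℝ)) * ∑ i, fi i x)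
    (φv : Fin n → Vec d) (x : Vec d)
    (φplus : Fin n → Finset (Fin d) → Vec d)
    (hφplus : φplus = fun i S =>
      φv i + mact (Matrix.diagonal ((μs i).marg) * (μs i).sketch S)
        (mact (Lidh i) (gradient (fi i) x) - φv i)) :
    ∀ y : Vec d,
      (∑ ω : Fin n → Finset (Fin d), (∏ i, (μs i).prob (ω i)) *
          ((1 / (n : ℝ)) * ∑ i,
            quad (Matrix.diagonal fun j => ((μs i).marg j)⁻¹)
              (φplus i (ω i) - mact (Lidh i) (gradient (fi i) y))))
        ≤ (1 / (n : ℝ)) * (∑ i,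
            quad ((Matrix.diagonal fun j => ((μs i).marg j)⁻¹) - 1)
              (φv i - mact (Lidh i) (gradient (fi i) y)))
          + 2 * (f x - f y - ⟪gradient f y, x - y⟫) := by
  intro y
  have hsymm (i : Fin n) : (Lidh i)ᵀ = Lidh i := (hLidh i).1.isHermitian
  have hLidag_sq (i : Fin n) : (Lidh i)ᵀ * Lidh i = Lidag i := by rw [hsymm, (hLidh i).2]
  have hLidag_fix (i : Fin n) : (Lidag i)ᵀ * Li i * Lidag i = Lidag i := by
    rw [← hLidag_sq, Matrix.transpose_mul, Matrix.transpose_transpose, hLidag_sq]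
    exact (hLidag i).2.1
  have hstep (i : Fin n) :
      ∑ S, (μs i).prob S * quad (Matrix.diagonal fun j => ((μs i).marg j)⁻¹)
          (φplus i S - mact (Lidh i) (gradient (fi i) y))
        ≤ quad ((Matrix.diagonal fun j => ((μs i).marg j)⁻¹) - 1)
            (φv i - mact (Lidh i) (gradient (fi i) y)) + 2 * bregman (fi i) x y := by
    rw [hφplus, Sampling.expected_quad_update, ← mact_sub, norm_mact_sq, hLidag_sq]
    exact add_le_add_right ((hfi i).2.2.2.quad_gradient_sub_le_bregman (hfi i).2.1
      ((hfi i).1 y) (hLidag_fix i) x) _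
  change _ ≤ _ + 2 * bregman f x y
  rw [hf, bregman_const_mul_sum (fun i => (hfi i).1 y)]
  calc _ = (1 / (n : ℝ)) * ∑ i, ∑ S, (μs i).prob S *
          quad (Matrix.diagonal fun j => ((μs i).marg j)⁻¹)
            (φplus i S - mact (Lidh i) (gradient (fi i) y)) := by
        rw [← sum_prod_mul_sum (fun i => (μs i).total), Finset.mul_sum]
        exact Finset.sum_congr rfl fun ω _ => mul_left_comm _ _ _
    _ ≤ (1 / (n : ℝ)) * ∑ i, (quad ((Matrix.diagonal fun j => ((μs i).marg j)⁻¹) - 1)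
            (φv i - mact (Lidh i) (gradient (fi i) y)) + 2 * bregman (fi i) x y) := by
        gcongr with i
        exact hstep i
    _ = _ := by
        rw [Finset.sum_add_distrib, ← Finset.mul_sum]
        ring

/-- ISEGA+ control-variate recursion. With `D_i = Diag(p_{i;·})` and updates
`φ_i⁺ = φ_i + D_i C_i (L_i^{†1/2} ∇f_i(x) − φ_i)`,
`E[(1/n) Σ_i ‖φ_i⁺ − L_i^{†1/2}∇f_i(y)‖²_{D_i⁻¹}]
  ≤ (1/n) Σ_i ‖φ_i − L_i^{†1/2}∇f_i(y)‖²_{D_i⁻¹ − I} + 2 D_f(x,y)`. -/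
theorem statement15 {d n : ℕ} (hn : 0 < n) (μs : Fin n → Sampling d)
    (fi : Fin n → Vec d → ℝ) (Li Lih Lidag Lidh : Fin n → Matrix (Fin d) (Fin d) ℝ)
    (hLi : ∀ i, (Li i).PosSemidef)
    (hfi : ∀ i, Differentiable ℝ (fi i) ∧ ConvexOn ℝ Set.univ (fi i) ∧
      BddBelow (Set.range (fi i)) ∧ MSmooth (fi i) (Li i))
    (hLih : ∀ i, (Lih i).PosSemidef ∧ Lih i * Lih i = Li i)
    (hLidag : ∀ i, IsMoorePenrose (Li i) (Lidag i))
    (hLidh : ∀ i, (Lidh i).PosSemidef ∧ Lidh i * Lidh i = Lidag i)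
    (f : Vec d → ℝ) (hf : f = fun x => (1 / (n : ℝ)) * ∑ i, fi i x)
    (φv : Fin n → Vec d) (x : Vec d)
    (φplus : Fin n → Finset (Fin d) → Vec d)
    (hφplus : φplus = fun i S =>
      φv i + mact (Matrix.diagonal ((μs i).marg) * (μs i).sketch S)
        (mact (Lidh i) (gradient (fi i) x) - φv i)) :
    ∀ y : Vec d,
      (∑ ω : Fin n → Finset (Fin d), (∏ i, (μs i).prob (ω i)) *
          ((1 / (n : ℝ)) * ∑ i,
            quad (Matrix.diagonal fun j => ((μs i).marg j)⁻¹)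
              (φplus i (ω i) - mact (Lidh i) (gradient (fi i) y))))
        ≤ (1 / (n : ℝ)) * (∑ i,
            quad ((Matrix.diagonal fun j => ((μs i).marg j)⁻¹) - 1)
              (φv i - mact (Lidh i) (gradient (fi i) y)))
          + 2 * (f x - f y - ⟪gradient f y, x - y⟫) :=
  statement15_general μs fi Li Lidag Lidh hfi hLidag hLidh f hf φv x φplus hφplus
end
end
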